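/- Let k be a field and suppose that the free group on two generators is k-resistant. Then for every family (A_i)_{i ∈ I} of torsion-free abelian groups, the free product (coproduct of groups, Monoid.CoprodI) of the family (A_i)_{i ∈ I} is k-resistant. -/

import Mathlib

open TwoSidedIdeal in
theorem exists_list_of_mem_span {R : Type*} [Ring R] {r x : R}
    (hx : x ∈ TwoSidedIdeal.span {r}) :
    ∃ l : List (R × R), x = (l.map fun p => p.1 * r * p.2).sum := by
  classical
  set gens : Set R := {y | ∃ a b : R, y = a * r * b} with hgens
  have hcl : ∀ {y : R}, y ∈ AddSubgroup.closure gens →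
      ∃ l : List (R × R), y = (l.map fun p => p.1 * r * p.2).sum := by
    intro y hy
    induction hy using AddSubgroup.closure_induction with
    | mem z hz => obtain ⟨a, b, rfl⟩ := hz; exact ⟨[(a, b)], by simp⟩
    | zero => exact ⟨[], by simp⟩
    | add z w _ _ hz hw =>
      obtain ⟨l₁, rfl⟩ := hz; obtain ⟨l₂, rfl⟩ := hw
      exact ⟨l₁ ++ l₂, by simp⟩
    | neg z hmem hz =>
      obtain ⟨l, rfl⟩ := hz
      refine ⟨l.map fun p => (-p.1, p.2), ?_⟩
      clear hx hmem
      induction l with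
      | nil => simp
      | cons p t ih => simp [ih, neg_add, neg_mul, add_comm]
  have hmull : ∀ (c : R) {y : R}, y ∈ AddSubgroup.closure gens →
      c * y ∈ AddSubgroup.closure gens := by
    intro c y hy
    induction hy using AddSubgroup.closure_induction with
    | mem z hz =>
      obtain ⟨a, b, rfl⟩ := hz
      exact AddSubgroup.subset_closure ⟨c * a, b, by noncomm_ring⟩
    | zero => simpa using AddSubgroup.zero_mem _
    | add z w _ _ hz hw => rw [mul_add]; exact AddSubgroup.add_mem _ hz hw
    | neg z _ hz => rw [mul_neg]; exact AddSubgroup.neg_mem _ hz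
  have hmulr : ∀ (c : R) {y : R}, y ∈ AddSubgroup.closure gens →
      y * c ∈ AddSubgroup.closure gens := by
    intro c y hy
    induction hy using AddSubgroup.closure_induction with
    | mem z hz =>
      obtain ⟨a, b, rfl⟩ := hz
      exact AddSubgroup.subset_closure ⟨a, b * c, by noncomm_ring⟩
    | zero => simpa using AddSubgroup.zero_mem _
    | add z w _ _ hz hw => rw [add_mul]; exact AddSubgroup.add_mem _ hz hw
    | neg z _ hz => rw [neg_mul]; exact AddSubgroup.neg_mem _ hz
  set I : TwoSidedIdeal R := TwoSidedIdeal.mk' (AddSubgroup.closure gens)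
    (AddSubgroup.zero_mem _) (fun ha hb => AddSubgroup.add_mem _ ha hb)
    (fun ha => AddSubgroup.neg_mem _ ha)
    (fun {c y} hy => hmull c hy) (fun {y c} hy => hmulr c hy) with hI
  have hxI : x ∈ I := by
    refine TwoSidedIdeal.mem_span_iff.1 hx I ?_
    intro y hy
    rcases hy with rfl
    show y ∈ I
    rw [hI, TwoSidedIdeal.mem_mk']
    exact AddSubgroup.subset_closure ⟨1, 1, by simp⟩
  rw [hI, TwoSidedIdeal.mem_mk'] at hxI
  exact hcl hxI

open Monoid.CoprodI

theorem coprodI_lift_ne_one {I J : Type*} {B : I → Type*} [∀ i, Group (B i)]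
    {H : J → Type*} [∀ j, Group (H j)] (n : I → J) (g : ∀ i, B i →* H (n i))
    (W : Monoid.CoprodI.Word B) (hW : W.toList ≠ [])
    (hletters : ∀ l ∈ W.toList, g l.1 l.2 ≠ 1)
    (hinj : ∀ l ∈ W.toList, ∀ l' ∈ W.toList, n l.1 = n l'.1 → l.1 = l'.1) :
    Monoid.CoprodI.lift (fun i => (Monoid.CoprodI.of (i := n i)).comp (g i)) W.prod ≠ 1 := by
  classical
  let F : (Σ i, B i) → Σ j, H j := fun l => ⟨n l.1, g l.1 l.2⟩
  have hchain : (W.toList.map F).Chain' fun l l' => l.1 ≠ l'.1 := by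
    change List.IsChain _ (W.toList.map F)
    rw [List.isChain_map]
    rw [List.isChain_iff_getElem]
    intro i hi
    have h1 := W.chain_ne
    rw [List.isChain_iff_getElem] at h1
    intro heq
    exact h1 i hi (hinj _ (List.getElem_mem _) _ (List.getElem_mem _) heq)
  let W' : Monoid.CoprodI.Word H := ⟨W.toList.map F, by
      rintro l' hl'
      rw [List.mem_map] at hl'
      obtain ⟨l, hl, rfl⟩ := hl'
      exact hletters l hl, hchain⟩
  have hprod : W'.prod =
      Monoid.CoprodI.lift (fun i => (Monoid.CoprodI.of (i := n i)).comp (g i)) W.prod := by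
    show (List.map (fun l => Monoid.CoprodI.of l.snd) (W.toList.map F)).prod
      = (Monoid.CoprodI.lift (fun i => (Monoid.CoprodI.of (i := n i)).comp (g i)))
        (List.map (fun l => Monoid.CoprodI.of l.snd) W.toList).prod
    rw [map_list_prod]
    rw [List.map_map, List.map_map]
    exact congrArg List.prod (List.map_congr_left fun l hl => by simp [F])
  intro hone
  rw [hone] at hprod
  have hWempty : W' = Monoid.CoprodI.Word.empty := by
    apply Monoid.CoprodI.Word.equiv.symm.injective
    show W'.prod = Monoid.CoprodI.Word.empty.prod
    rw [hprod, Monoid.CoprodI.Word.prod_empty]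
  have hmapnil : W.toList.map F = [] := congrArg Monoid.CoprodI.Word.toList hWempty
  exact hW (List.map_eq_nil_iff.1 hmapnil)

open Polynomial in
theorem exists_addHom_ne_zero {M : Type*} [AddCommGroup M] [Module.Free ℤ M]
    [Module.Finite ℤ M] {L : Set M} (hLfin : L.Finite) (hL0 : (0 : M) ∉ L) :
    ∃ f : M →+ ℤ, ∀ v ∈ L, f v ≠ 0 := by
  classical
  let ι := Module.Free.ChooseBasisIndex ℤ M
  let b : Module.Basis ι ℤ M := Module.Free.chooseBasis ℤ M
  let e : ι → ℕ := fun j => (Fintype.equivFin ι j : ℕ)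
  have he : Function.Injective e := fun a a' h =>
    (Fintype.equivFin ι).injective (Fin.val_injective h)
  let p : M → Polynomial ℤ := fun v => ∑ j : ι, C (b.coord j v) * X ^ (e j)
  have hpne : ∀ v ∈ L, p v ≠ 0 := by
    intro v hv
    have hvne : v ≠ 0 := fun h => hL0 (h ▸ hv)
    obtain ⟨j₀, hj₀⟩ : ∃ j₀, b.coord j₀ v ≠ 0 := by
      by_contra hcon
      push_neg at hcon
      apply hvne
      have := b.sum_repr v
      rw [← this]
      apply Finset.sum_eq_zero
      intro j _
      have : b.repr v j = 0 := hcon j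
      rw [this, zero_smul]
    intro hp0
    apply hj₀
    have hco : (p v).coeff (e j₀) = b.coord j₀ v := by
      show (∑ j : ι, C (b.coord j v) * X ^ (e j)).coeff (e j₀) = _
      rw [finset_sum_coeff]
      rw [Finset.sum_eq_single j₀]
      · simp [coeff_C_mul, coeff_X_pow]
      · intro j _ hj
        rw [coeff_C_mul, coeff_X_pow, if_neg (fun h => hj (he h.symm)), mul_zero]
      · simp
    rw [← hco, hp0, coeff_zero]
  have hRfin : (⋃ v ∈ L, {t : ℤ | (p v).IsRoot t}).Finite :=
    hLfin.biUnion fun v hv => finite_setOf_isRoot (hpne v hv)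
  obtain ⟨t, ht⟩ := hRfin.infinite_compl.nonempty
  let fL : M →ₗ[ℤ] ℤ := ∑ j : ι, t ^ (e j) • b.coord j
  have hfL : ∀ v, fL v = (p v).eval t := by
    intro v
    show (∑ j : ι, t ^ (e j) • b.coord j) v = (∑ j : ι, C (b.coord j v) * X ^ (e j)).eval t
    rw [LinearMap.sum_apply, eval_finset_sum]
    apply Finset.sum_congr rfl
    intro j _
    rw [LinearMap.smul_apply, eval_mul, eval_C, eval_pow, eval_X]
    simp [mul_comm]
  refine ⟨fL.toAddMonoidHom, ?_⟩
  intro v hv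
  have hroot : ¬ (p v).IsRoot t := by
    intro hroot
    apply ht
    exact Set.mem_biUnion hv hroot
  show fL v ≠ 0
  rw [hfL]
  exact hroot

noncomputable section KCRPingPong

/-- The permutation of `ℚ × ℚ` given by the matrix `[[1, 2k], [0, 1]]`. -/
def kcrA (k : ℤ) : Equiv.Perm (ℚ × ℚ) where
  toFun v := (v.1 + 2 * k * v.2, v.2)
  invFun v := (v.1 - 2 * k * v.2, v.2)
  left_inv v := by ext <;> simp <;> ring
  right_inv v := by ext <;> simp <;> ring

/-- The permutation of `ℚ × ℚ` given by the matrix `[[1, 0], [4k, 1]]`. -/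
def kcrB (k : ℤ) : Equiv.Perm (ℚ × ℚ) where
  toFun v := (v.1, 4 * k * v.1 + v.2)
  invFun v := (v.1, v.2 - 4 * k * v.1)
  left_inv v := by ext <;> simp <;> ring
  right_inv v := by ext <;> simp <;> ring

lemma kcrA_add (k l : ℤ) : kcrA (k + l) = kcrA k * kcrA l := by
  ext v <;> simp [kcrA, Equiv.Perm.mul_apply] <;> push_cast <;> ring

lemma kcrB_add (k l : ℤ) : kcrB (k + l) = kcrB k * kcrB l := by
  ext v <;> simp [kcrB, Equiv.Perm.mul_apply] <;> push_cast <;> ring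

lemma kcr_hom_zpow {G : Type*} [Group G] (f : ℤ → G)
    (hf : ∀ k l, f (k + l) = f k * f l) (k : ℤ) : f 1 ^ k = f k := by
  have h0 : f 0 = 1 :=
    mul_left_cancel (a := f 0) (by rw [mul_one, ← hf 0 0, add_zero])
  induction k using Int.induction_on with
  | zero => simpa using h0.symm
  | succ n ih => rw [show ((n : ℤ) + 1) = (n + 1 : ℤ) by ring, zpow_add_one, ih, ← hf]
  | pred n ih =>
      rw [show (-(n : ℤ) - 1) = (-(n:ℤ) - 1 : ℤ) by ring, zpow_sub_one, ih]
      have := hf (-(n:ℤ) - 1) 1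
      rw [show (-(n:ℤ) - 1 + 1) = -(n:ℤ) by ring] at this
      rw [this, mul_inv_cancel_right]

lemma kcrA_zpow (k : ℤ) : kcrA 1 ^ k = kcrA k := kcr_hom_zpow kcrA kcrA_add k
lemma kcrB_zpow (k : ℤ) : kcrB 1 ^ k = kcrB k := kcr_hom_zpow kcrB kcrB_add k

lemma kcrA_inv (k : ℤ) : (kcrA k)⁻¹ = kcrA (-k) := by
  rw [← kcrA_zpow k, ← kcrA_zpow (-k), ← zpow_neg]

/-- The homomorphism from the free group on two generators into permutations of `ℚ × ℚ`. -/
def kcrPhi : FreeGroup (Fin 2) →* Equiv.Perm (ℚ × ℚ) :=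
  FreeGroup.lift ![kcrA 1, kcrB 1]

/-- The elements `a^(2m) * b * a^(-2m)` of the free group on two generators. -/
def kcrC (m : ℤ) : FreeGroup (Fin 2) :=
  FreeGroup.of 0 ^ (2 * m) * FreeGroup.of 1 * (FreeGroup.of 0 ^ (2 * m))⁻¹

lemma kcrPhi_c_zpow (m t : ℤ) :
    kcrPhi (kcrC m ^ t) = kcrA (2 * m) * kcrB t * kcrA (-(2 * m)) := by
  have h1 : kcrC m ^ t = FreeGroup.of 0 ^ (2 * m) * FreeGroup.of 1 ^ t *
      (FreeGroup.of 0 ^ (2 * m))⁻¹ := by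
    rw [kcrC]
    exact conj_zpow
  rw [h1]
  have ha : kcrPhi (FreeGroup.of 0) = kcrA 1 := by
    simp [kcrPhi]
  have hb : kcrPhi (FreeGroup.of 1) = kcrB 1 := by
    simp [kcrPhi]
  rw [map_mul, map_mul, map_inv, map_zpow, map_zpow, ha, hb, kcrA_zpow, kcrB_zpow, kcrA_inv]

/-- The ping-pong sets. -/
def kcrX (m : ℤ) : Set (ℚ × ℚ) := {v | |v.1 - 4 * m * v.2| < |v.2|}

lemma kcr_ineq (a b t v1 v2 : ℚ) (hab : 4 ≤ |a - b|) (ht : 4 ≤ |t|)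
    (hv : |v1 - b * v2| < |v2|) :
    |v1 - a * v2| < |t * (v1 - a * v2) + v2| := by
  set u := v1 - a * v2 with hu
  have e0 : (0 : ℚ) < |v2| := lt_of_le_of_lt (abs_nonneg _) hv
  have e1 : |(a - b) * v2| ≤ |v1 - b * v2| + |u| := by
    have h : (a - b) * v2 = (v1 - b * v2) + (-u) := by rw [hu]; ring
    rw [h]
    exact le_trans (abs_add_le _ _) (by rw [abs_neg])
  have e2 : |(a - b) * v2| = |a - b| * |v2| := abs_mul _ _
  have h3 : 3 * |v2| < |u| := by nlinarith [abs_nonneg u, abs_nonneg (v1 - b * v2)]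
  have e3 : |t * u| ≤ |t * u + v2| + |v2| := by
    have h : t * u = (t * u + v2) + (-v2) := by ring
    nth_rewrite 1 [h]
    exact le_trans (abs_add_le _ _) (by rw [abs_neg])
  have e4 : |t * u| = |t| * |u| := abs_mul _ _
  nlinarith [abs_nonneg u, abs_nonneg (t * u + v2),
    mul_nonneg (sub_nonneg.2 ht) (abs_nonneg u)]

lemma kcr_disj (m m' : ℤ) (hne : m ≠ m') : Disjoint (kcrX m) (kcrX m') := by
  rw [Set.disjoint_left]
  rintro ⟨v1, v2⟩ h1 h2
  simp only [kcrX, Set.mem_setOf_eq] at h1 h2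
  have e0 : (0 : ℚ) < |v2| := lt_of_le_of_lt (abs_nonneg _) h1
  have hab : (4 : ℚ) ≤ |4 * (m : ℚ) - 4 * (m' : ℚ)| := by
    have h5 : (1 : ℤ) ≤ |m - m'| := Int.one_le_abs (sub_ne_zero.2 hne)
    have h6 : (1 : ℚ) ≤ |(m : ℚ) - (m' : ℚ)| := by exact_mod_cast h5
    have h7 : 4 * (m : ℚ) - 4 * (m' : ℚ) = 4 * ((m : ℚ) - m') := by ring
    rw [h7, abs_mul, abs_of_nonneg (by norm_num : (0:ℚ) ≤ 4)]
    linarith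
  have e1 : |4 * (m:ℚ) - 4 * m'| * |v2| = |(4 * (m:ℚ) - 4 * m') * v2| := (abs_mul _ _).symm
  have e2 : |(4 * (m:ℚ) - 4 * m') * v2| ≤ |v1 - 4 * m' * v2| + |v1 - 4 * m * v2| := by
    have h : (4 * (m:ℚ) - 4 * m') * v2 = (v1 - 4 * m' * v2) + (-(v1 - 4 * m * v2)) := by ring
    rw [h]
    exact le_trans (abs_add_le _ _) (by rw [abs_neg])
  nlinarith [abs_nonneg v2]

end KCRPingPong

noncomputable section KCRPingPong2

/-- The action of the free group on two generators on `ℚ × ℚ` via `kcrPhi`. -/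
def kcrAction : MulAction (FreeGroup (Fin 2)) (ℚ × ℚ) := MulAction.compHom _ kcrPhi

lemma kcr_apply (m t : ℤ) (v : ℚ × ℚ) :
    kcrPhi (kcrC m ^ t) v =
      ((v.1 - 4 * m * v.2) + 4 * m * (4 * t * (v.1 - 4 * m * v.2) + v.2),
        4 * t * (v.1 - 4 * m * v.2) + v.2) := by
  rw [kcrPhi_c_zpow]
  show kcrA (2 * m) (kcrB t (kcrA (-(2 * m)) v)) = _
  simp only [kcrA, kcrB, Equiv.coe_fn_mk]
  ext <;> push_cast <;> ring

theorem kcr_injective :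
    Function.Injective (Monoid.CoprodI.lift
      (fun m : ℤ => zpowersHom (FreeGroup (Fin 2)) (kcrC m)) :
      Monoid.CoprodI (fun _ : ℤ => Multiplicative ℤ) →* FreeGroup (Fin 2)) := by
  letI := kcrAction
  refine Monoid.CoprodI.lift_injective_of_ping_pong _ ?_ kcrX ?_ ?_ ?_
  · left
    refine le_trans ?_ (Cardinal.aleph0_le_mk ℤ)
    exact le_of_lt (Cardinal.nat_lt_aleph0 3)
  · intro m
    refine ⟨((4 * m : ℤ), 1), ?_⟩
    simp [kcrX]
  · intro m m' hne
    exact kcr_disj m m' hne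
  · intro m m' hne h hone
    rintro w ⟨v, hv, rfl⟩
    set t : ℤ := Multiplicative.toAdd h with hht
    have htne : t ≠ 0 := by
      intro h0
      apply hone
      rw [← ofAdd_toAdd h, ← hht, h0, ofAdd_zero]
    have hsm : zpowersHom (FreeGroup (Fin 2)) (kcrC m) h • v = kcrPhi (kcrC m ^ t) v := rfl
    show ((zpowersHom (FreeGroup (Fin 2))) (kcrC m)) h • v ∈ kcrX m
    rw [hsm, kcr_apply]
    obtain ⟨v1, v2⟩ := v
    simp only [kcrX, Set.mem_setOf_eq] at hv ⊢
    have hg : (v1 - 4 * (m:ℚ) * v2) + 4 * m * (4 * t * (v1 - 4 * m * v2) + v2)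
        - 4 * m * (4 * t * (v1 - 4 * m * v2) + v2) = v1 - 4 * m * v2 := by ring
    rw [hg]
    have hab : (4 : ℚ) ≤ |4 * (m : ℚ) - 4 * (m' : ℚ)| := by
      have h5 : (1 : ℤ) ≤ |m - m'| := Int.one_le_abs (sub_ne_zero.2 hne)
      have h6 : (1 : ℚ) ≤ |(m : ℚ) - (m' : ℚ)| := by exact_mod_cast h5
      have h7 : 4 * (m : ℚ) - 4 * (m' : ℚ) = 4 * ((m : ℚ) - m') := by ring
      rw [h7, abs_mul, abs_of_nonneg (by norm_num : (0:ℚ) ≤ 4)]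
      linarith
    have ht4 : (4 : ℚ) ≤ |4 * (t : ℚ)| := by
      have h5 : (1 : ℤ) ≤ |t| := Int.one_le_abs htne
      have h6 : (1 : ℚ) ≤ |(t : ℚ)| := by exact_mod_cast h5
      rw [abs_mul, abs_of_nonneg (by norm_num : (0:ℚ) ≤ 4)]
      linarith
    have := kcr_ineq (4 * (m:ℚ)) (4 * (m':ℚ)) (4 * (t:ℚ)) v1 v2 hab ht4 hv
    calc |v1 - 4 * (m:ℚ) * v2| < |4 * (t:ℚ) * (v1 - 4 * (m:ℚ) * v2) + v2| := this
      _ = |4 * (t:ℚ) * (v1 - 4 * (m:ℚ) * v2) + v2| := rfl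

end KCRPingPong2

open Monoid.CoprodI in
/-- A torsion-free abelian group has no `ℤ`-torsion (as an additive group). -/
lemma kcr_noZeroSMul {Γ : Type*} [CommGroup Γ] (hΓ : ∀ a : Γ, a ≠ 1 → ¬ IsOfFinOrder a) :
    NoZeroSMulDivisors ℤ (Additive Γ) := by
  constructor
  intro c x hcx
  by_cases hc : c = 0
  · exact Or.inl hc
  · right
    set b : Γ := Additive.toMul x with hb
    have hbc : b ^ c = 1 := by
      have := congrArg Additive.toMul hcx
      simpa [hb] using this
    have hpow : b ^ c.natAbs = 1 := by
      rcases Int.natAbs_eq c with h | h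
      · rw [← zpow_natCast, ← h, hbc]
      · rw [← zpow_natCast, ← neg_neg (c.natAbs : ℤ), ← h, zpow_neg, hbc, inv_one]
    have hfin : IsOfFinOrder b :=
      isOfFinOrder_iff_pow_eq_one.2 ⟨c.natAbs, Int.natAbs_pos.2 hc, hpow⟩
    have hb1 : b = 1 := by
      by_contra hb1
      exact hΓ b hb1 hfin
    have : Additive.toMul x = Additive.toMul (0 : Additive Γ) := by
      rw [← hb, hb1]; rfl
    exact Additive.toMul.injective this

lemma kcr_exists_chi {Γ : Type*} [CommGroup Γ] (hΓ : ∀ a : Γ, a ≠ 1 → ¬ IsOfFinOrder a)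
    (S : Set Γ) (hS : S.Finite) {L : Set ↥(Subgroup.closure S)} (hL : L.Finite)
    (hL1 : (1 : ↥(Subgroup.closure S)) ∉ L) :
    ∃ χ : ↥(Subgroup.closure S) →* Multiplicative ℤ, ∀ b ∈ L, χ b ≠ 1 := by
  haveI := hS.to_subtype
  have hBtf : ∀ b : ↥(Subgroup.closure S), b ≠ 1 → ¬ IsOfFinOrder b := by
    intro b hb1 hfin
    have h2 : IsOfFinOrder ((Subgroup.closure S).subtype b) :=
      ((Subgroup.closure S).subtype).isOfFinOrder hfin
    have h3 : ((b : Γ)) ≠ 1 := fun h => hb1 (OneMemClass.coe_eq_one.1 h)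
    exact hΓ _ h3 h2
  haveI : AddGroup.FG (Additive ↥(Subgroup.closure S)) := GroupFG.iff_add_fg.mp inferInstance
  haveI : Module.Finite ℤ (Additive ↥(Subgroup.closure S)) :=
    Module.Finite.iff_addGroup_fg.mpr inferInstance
  haveI : NoZeroSMulDivisors ℤ (Additive ↥(Subgroup.closure S)) := kcr_noZeroSMul hBtf
  haveI : Module.Free ℤ (Additive ↥(Subgroup.closure S)) :=
    Module.free_of_finite_type_torsion_free'
  have h0 : (0 : Additive ↥(Subgroup.closure S)) ∉ (Additive.ofMul '' L) := by
    rintro ⟨b, hb, hb0⟩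
    apply hL1
    have : b = 1 := Additive.ofMul.injective (by simpa using hb0)
    rwa [this] at hb
  obtain ⟨f, hf⟩ := exists_addHom_ne_zero (hL.image _) h0
  refine ⟨AddMonoidHom.toMultiplicativeRight f, ?_⟩
  intro b hb
  have := hf (Additive.ofMul b) (Set.mem_image_of_mem _ hb)
  simp only [AddMonoidHom.toMultiplicativeRight_apply_apply, ne_eq]
  intro h1
  apply this
  have := congrArg Multiplicative.toAdd h1
  simpa using this

/-- A group `G` is `k`-resistant if every element of the group algebra `k G` whose support
has cardinality `> 1` generates a proper two-sided ideal of `k G`. -/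
def KResistant (k : Type*) [Field k] (G : Type*) [Group G] : Prop :=
  ∀ r : MonoidAlgebra k G, 1 < r.coeff.support.card → TwoSidedIdeal.span {r} ≠ ⊤

set_option maxHeartbeats 1000000 in
open Monoid.CoprodI in
/-- If the free group on two generators is `k`-resistant, then the free product (coproduct)
of any family of torsion-free abelian groups is `k`-resistant. -/
theorem kResistant_coprodI_of_kResistant_freeGroup {k : Type*} [Field k]
    (hfree : KResistant k (FreeGroup (Fin 2)))
    {I : Type*} (A : I → Type*) [∀ i, CommGroup (A i)]
    (hA : ∀ i (a : A i), a ≠ 1 → ¬ IsOfFinOrder a) :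
    KResistant k (Monoid.CoprodI A) := by
  classical
  intro r hr hspan
  -- 1 is a finite combination ∑ aᵢ * r * bᵢ
  have h1 : (1 : MonoidAlgebra k (Monoid.CoprodI A)) ∈ TwoSidedIdeal.span {r} := by
    rw [hspan]; trivial
  obtain ⟨l, hl⟩ := exists_list_of_mem_span h1
  -- the finite set of group elements involved
  set Tset : Set (Monoid.CoprodI A) :=
    ↑r.coeff.support ∪ ⋃ p ∈ {q | q ∈ l}, ((↑(Prod.fst p).coeff.support ∪ ↑(Prod.snd p).coeff.support) :
      Set (Monoid.CoprodI A)) with hTset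
  have hTfin : Tset.Finite := by
    apply Set.Finite.union (r.coeff.support.finite_toSet)
    exact Set.Finite.biUnion (l.finite_toSet)
      (fun p _ => Set.Finite.union (p.1.coeff.support.finite_toSet) (p.2.coeff.support.finite_toSet))
  -- the letters of the words of elements of Tset
  set allLetters : Set (Σ i, A i) := ⋃ g ∈ Tset, {l' | l' ∈ (Word.equiv g).toList}
    with hallLetters
  have hallFin : allLetters.Finite :=
    hTfin.biUnion (fun g _ => (Word.equiv g).toList.finite_toSet)
  set Sset : ∀ i, Set (A i) := fun i => {a | (⟨i, a⟩ : Σ i, A i) ∈ allLetters} with hSset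
  have hSfin : ∀ i, (Sset i).Finite := by
    intro i
    have : Sset i = Sigma.mk i ⁻¹' allLetters := rfl
    rw [this]
    exact Set.Finite.preimage (Set.injOn_of_injective sigma_mk_injective) hallFin
  set Bfam : ∀ i, Subgroup (A i) := fun i => Subgroup.closure (Sset i) with hBfam
  -- the inclusion of the free product of the Bfam
  set θ : Monoid.CoprodI (fun i => ↥(Bfam i)) →* Monoid.CoprodI A :=
    Monoid.CoprodI.lift (fun i =>
      (Monoid.CoprodI.of (i := id i)).comp (Bfam i).subtype) with hθ
  have hθof : ∀ (i : I) (b : ↥(Bfam i)), θ (Monoid.CoprodI.of b) = Monoid.CoprodI.of (b : A i) := by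
    intro i b
    rw [hθ, Monoid.CoprodI.lift_of]
    rfl
  have θinj : Function.Injective θ := by
    rw [injective_iff_map_eq_one]
    intro w hw
    by_contra hne
    have hprodW : (Word.equiv w).prod = w := Word.equiv.symm_apply_apply w
    have hWne : (Word.equiv w).toList ≠ [] := by
      intro hnil
      apply hne
      rw [← hprodW, Word.prod, hnil]
      simp
    refine coprodI_lift_ne_one (H := A) (fun i => id i) (fun i => (Bfam i).subtype)
      (Word.equiv w) hWne ?_ ?_ ?_
    · intro l' hl'
      have := (Word.equiv w).ne_one l' hl'
      exact fun h => this (OneMemClass.coe_eq_one.1 h)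
    · intro l' _ l'' _ h
      exact h
    · rw [hprodW]
      exact hw
  have hTrange : ∀ g ∈ Tset, ∃ w, θ w = g := by
    intro g hg
    have hgw : (Word.equiv g).prod = g := Word.equiv.symm_apply_apply g
    have hmem : (Word.equiv g).prod ∈ θ.range := by
      rw [Word.prod]
      apply list_prod_mem
      intro x hx
      rw [List.mem_map] at hx
      obtain ⟨l', hl', rfl⟩ := hx
      have hlet : l' ∈ allLetters := by
        rw [hallLetters]
        exact Set.mem_biUnion hg hl'
      have hS : l'.2 ∈ Sset l'.1 := hlet
      have hBmem : l'.2 ∈ Bfam l'.1 := Subgroup.subset_closure hS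
      exact ⟨Monoid.CoprodI.of (⟨l'.2, hBmem⟩ : ↥(Bfam l'.1)), hθof _ _⟩
    rw [hgw] at hmem
    exact hmem
  -- transporting the equation to the free product of the Bfam
  set Fθ : MonoidAlgebra k (Monoid.CoprodI (fun i => ↥(Bfam i))) →+*
      MonoidAlgebra k (Monoid.CoprodI A) := MonoidAlgebra.mapDomainRingHom k θ with hFθ
  have hFθdef : ∀ z, (Fθ z).coeff = Finsupp.mapDomain θ z.coeff := fun z => rfl
  have hFθsingle : ∀ (w : Monoid.CoprodI (fun i => ↥(Bfam i))) (c : k),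
      Fθ (MonoidAlgebra.single w c) = MonoidAlgebra.single (θ w) c := by
    intro w c
    exact MonoidAlgebra.mapDomain_single
  have hpre : ∀ x : MonoidAlgebra k (Monoid.CoprodI A), ↑x.coeff.support ⊆ Tset →
      ∃ x₀, Fθ x₀ = x := by
    intro x hx
    have hsec : ∀ g ∈ x.coeff.support, ∃ w, θ w = g := fun g hg => hTrange g (hx hg)
    choose sec hsec using hsec
    refine ⟨∑ g ∈ x.coeff.support.attach, MonoidAlgebra.single (sec g g.2) (x.coeff g), ?_⟩
    rw [map_sum]
    have : ∀ g ∈ x.coeff.support.attach,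
        Fθ (MonoidAlgebra.single (sec g g.2) (x.coeff g))
          = MonoidAlgebra.single (g : Monoid.CoprodI A) (x.coeff g) := by
      intro g _
      rw [hFθsingle, hsec]
    rw [Finset.sum_congr rfl this, Finset.sum_attach x.coeff.support
      (fun g => MonoidAlgebra.single g (x.coeff g))]
    exact MonoidAlgebra.sum_coeff_single x
  obtain ⟨r₀, hr₀⟩ := hpre r (by rw [hTset]; exact Set.subset_union_left)
  have hpl : ∀ p ∈ l, ∃ q : MonoidAlgebra k (Monoid.CoprodI (fun i => ↥(Bfam i))) ×
      MonoidAlgebra k (Monoid.CoprodI (fun i => ↥(Bfam i))),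
      Fθ q.1 = p.1 ∧ Fθ q.2 = p.2 := by
    intro p hp
    obtain ⟨q1, hq1⟩ := hpre p.1 (by
      rw [hTset]
      intro g hg
      exact Set.mem_union_right _ (Set.mem_biUnion hp (Set.mem_union_left _ hg)))
    obtain ⟨q2, hq2⟩ := hpre p.2 (by
      rw [hTset]
      intro g hg
      exact Set.mem_union_right _ (Set.mem_biUnion hp (Set.mem_union_right _ hg)))
    exact ⟨(q1, q2), hq1, hq2⟩
  set l₀ := l.attach.map (fun q => Classical.choose (hpl q.1 q.2)) with hl₀
  have hsum₀ : (l₀.map fun q => q.1 * r₀ * q.2).sum = 1 := by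
    have hmapeq : l₀.map (⇑Fθ ∘ fun q => q.1 * r₀ * q.2) = l.map (fun p => p.1 * r * p.2) := by
      rw [hl₀, List.map_map]
      rw [← List.attach_map_val (l := l) (f := fun p => p.1 * r * p.2)]
      apply List.map_congr_left
      intro q hq
      have hspec := Classical.choose_spec (hpl q.1 q.2)
      simp only [Function.comp_apply, map_mul]
      rw [hspec.1, hspec.2, hr₀]
    have h6 : Fθ ((l₀.map fun q => q.1 * r₀ * q.2).sum) = Fθ 1 := by
      rw [map_list_sum, List.map_map, hmapeq, ← hl, map_one]
    have h9 : Finsupp.mapDomain (⇑θ) ((l₀.map fun q => q.1 * r₀ * q.2).sum).coeff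
        = Finsupp.mapDomain (⇑θ)
          (1 : MonoidAlgebra k (Monoid.CoprodI fun i => ↥(Bfam i))).coeff := by
      rw [← hFθdef, ← hFθdef, h6]
    exact MonoidAlgebra.coeff_injective (Finsupp.mapDomain_injective θinj h9)
  have hr₀card : 1 < r₀.coeff.support.card := by
    have h5 : r.coeff.support = r₀.coeff.support.image θ := by
      rw [← hr₀, hFθdef, Finsupp.mapDomain_support_of_injective θinj]
    rw [h5, Finset.card_image_of_injective _ θinj] at hr
    exact hr
  -- Stage 2: map the support differences injectively into the free group on two generators
  set Dset : Set (Monoid.CoprodI fun i => ↥(Bfam i)) :=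
    (fun p : (Monoid.CoprodI fun i => ↥(Bfam i)) × (Monoid.CoprodI fun i => ↥(Bfam i)) =>
      p.1 * p.2⁻¹) '' ((↑r₀.coeff.support : Set _) ×ˢ (↑r₀.coeff.support : Set _)) with hDset
  have hDfin : Dset.Finite :=
    ((r₀.coeff.support.finite_toSet).prod (r₀.coeff.support.finite_toSet)).image _
  set allL2 : Set (Σ i, ↥(Bfam i)) := ⋃ d ∈ Dset, {l' | l' ∈ (Word.equiv d).toList} with hallL2
  have hallL2fin : allL2.Finite :=
    hDfin.biUnion (fun d _ => (Word.equiv d).toList.finite_toSet)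
  set Lset : ∀ i, Set ↥(Bfam i) := fun i => {b | (⟨i, b⟩ : Σ i, ↥(Bfam i)) ∈ allL2} with hLset
  have hLfin : ∀ i, (Lset i).Finite := fun i =>
    Set.Finite.preimage (Set.injOn_of_injective sigma_mk_injective) hallL2fin
  have hL1 : ∀ i, (1 : ↥(Bfam i)) ∉ Lset i := by
    intro i hmem
    have hmem' : (⟨i, 1⟩ : Σ i, ↥(Bfam i)) ∈ allL2 := hmem
    rw [hallL2] at hmem'
    simp only [Set.mem_iUnion, Set.mem_setOf_eq] at hmem'
    obtain ⟨d, hd, hl'⟩ := hmem'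
    exact (Word.equiv d).ne_one _ hl' rfl
  have hchi : ∀ i, ∃ χ : ↥(Bfam i) →* Multiplicative ℤ, ∀ b ∈ Lset i, χ b ≠ 1 := by
    intro i
    exact kcr_exists_chi (hA i) (Sset i) (hSfin i) (hLfin i) (hL1 i)
  choose χfam hχfam using hchi
  set Active : Set I := Sigma.fst '' allL2 with hActive
  have hActivefin : Active.Finite := hallL2fin.image _
  set nmap : I → ℤ := fun i =>
    if h : i ∈ hActivefin.toFinset then ((hActivefin.toFinset.equivFin ⟨i, h⟩ : Fin _) : ℤ)
    else 0 with hnmap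
  have hninj : Set.InjOn nmap Active := by
    intro i hi i' hi' heq
    have hi2 : i ∈ hActivefin.toFinset := hActivefin.mem_toFinset.2 hi
    have hi2' : i' ∈ hActivefin.toFinset := hActivefin.mem_toFinset.2 hi'
    rw [hnmap] at heq
    simp only [dif_pos hi2, dif_pos hi2'] at heq
    have h3 : ((hActivefin.toFinset.equivFin ⟨i, hi2⟩ : Fin _) : ℕ)
        = ((hActivefin.toFinset.equivFin ⟨i', hi2'⟩ : Fin _) : ℕ) := by exact_mod_cast heq
    have h4 := hActivefin.toFinset.equivFin.injective (Fin.val_injective h3)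
    exact congrArg Subtype.val h4
  set σ : (Monoid.CoprodI fun i => ↥(Bfam i)) →* Monoid.CoprodI (fun _ : ℤ => Multiplicative ℤ) :=
    Monoid.CoprodI.lift (fun i => (Monoid.CoprodI.of (i := nmap i)).comp (χfam i)) with hσdef
  set Ψ : Monoid.CoprodI (fun _ : ℤ => Multiplicative ℤ) →* FreeGroup (Fin 2) :=
    Monoid.CoprodI.lift (fun m : ℤ => zpowersHom (FreeGroup (Fin 2)) (kcrC m)) with hΨdef
  set ψ : (Monoid.CoprodI fun i => ↥(Bfam i)) →* FreeGroup (Fin 2) := Ψ.comp σ with hψdef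
  have hψinjon : Set.InjOn ψ ↑r₀.coeff.support := by
    intro g hg g' hg' heq
    by_contra hne
    have hd : g * g'⁻¹ ∈ Dset := ⟨(g, g'), ⟨hg, hg'⟩, rfl⟩
    have hdne : g * g'⁻¹ ≠ 1 := by rwa [Ne, mul_inv_eq_one]
    have hσne : σ (g * g'⁻¹) ≠ 1 := by
      rw [hσdef]
      have hprodW : (Word.equiv (g * g'⁻¹)).prod = g * g'⁻¹ :=
        Word.equiv.symm_apply_apply _
      have hWne : (Word.equiv (g * g'⁻¹)).toList ≠ [] := by
        intro hnil
        apply hdne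
        rw [← hprodW, Word.prod, hnil]
        simp
      rw [← hprodW]
      refine coprodI_lift_ne_one (H := fun _ : ℤ => Multiplicative ℤ) nmap χfam (Word.equiv (g * g'⁻¹)) hWne ?_ ?_
      · intro l' hl'
        apply hχfam
        show (⟨l'.1, l'.2⟩ : Σ i, ↥(Bfam i)) ∈ allL2
        rw [hallL2]
        refine Set.mem_biUnion hd ?_
        simpa using hl'
      · intro l' hl' l'' hl'' h
        refine hninj ?_ ?_ h
        · exact ⟨⟨l'.1, l'.2⟩, by rw [hallL2]; exact Set.mem_biUnion hd (by simpa using hl'), rfl⟩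
        · exact ⟨⟨l''.1, l''.2⟩, by rw [hallL2]; exact Set.mem_biUnion hd (by simpa using hl''), rfl⟩
    apply hσne
    apply kcr_injective
    rw [← hΨdef]
    have h5 : Ψ (σ (g * g'⁻¹)) = ψ g * (ψ g')⁻¹ := by
      rw [map_mul, map_inv, map_mul, map_inv]
      rfl
    rw [map_one, h5, heq, mul_inv_cancel]
  set Fψ : MonoidAlgebra k (Monoid.CoprodI fun i => ↥(Bfam i)) →+*
      MonoidAlgebra k (FreeGroup (Fin 2)) := MonoidAlgebra.mapDomainRingHom k ψ with hFψ
  set r₂ := Fψ r₀ with hr₂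
  have hr₂card : 1 < r₂.coeff.support.card := by
    have h6 : r₂.coeff.support = r₀.coeff.support.image ψ := by
      rw [hr₂]
      exact Finsupp.mapDomain_support_of_injOn r₀.coeff hψinjon
    rw [h6, Finset.card_image_of_injOn hψinjon]
    exact hr₀card
  apply hfree r₂ hr₂card
  rw [← TwoSidedIdeal.one_mem_iff]
  have heq1 : (1 : MonoidAlgebra k (FreeGroup (Fin 2)))
      = ((l₀.map (⇑Fψ ∘ fun q => q.1 * r₀ * q.2)).sum) := by
    have h7 := congrArg Fψ hsum₀
    rw [map_list_sum, List.map_map, map_one] at h7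
    exact h7.symm
  rw [heq1]
  have hsummem : ∀ (L : List (MonoidAlgebra k (FreeGroup (Fin 2)))),
      (∀ z ∈ L, z ∈ TwoSidedIdeal.span {r₂}) → L.sum ∈ TwoSidedIdeal.span {r₂} := by
    intro L hL
    induction L with
    | nil => simpa using (TwoSidedIdeal.span {r₂}).zero_mem
    | cons a t ih =>
        rw [List.sum_cons]
        exact (TwoSidedIdeal.span {r₂}).add_mem (hL a (by simp))
          (ih (fun z hz => hL z (by simp [hz])))
  apply hsummem
  intro z hz
  rw [List.mem_map] at hz
  obtain ⟨q, hq, rfl⟩ := hz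
  have h8 : (⇑Fψ ∘ fun q => q.1 * r₀ * q.2) q = Fψ q.1 * r₂ * Fψ q.2 := by
    simp only [Function.comp_apply, map_mul, hr₂]
  rw [h8]
  exact TwoSidedIdeal.mul_mem_right _ _ _
    (TwoSidedIdeal.mul_mem_left _ _ _ (TwoSidedIdeal.subset_span rfl))
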